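/- The weighted Möbius gyromidpoint is well defined and lies in the Poincaré ball: let v_1, …, v_T ∈ B_c^n and α_1, …, α_T ≥ 0 with Σ_j α_j > 0, and let λ_{v_j}^c = 2/(1 − c‖v_j‖²). Then the denominator Σ_j α_j (λ_{v_j}^c − 1) ≥ Σ_j α_j > 0, and the point p = w / (1 + √(1 + c‖w‖²)), where w = (Σ_j α_j λ_{v_j}^c v_j) / (Σ_j α_j (λ_{v_j}^c − 1)), satisfies c‖p‖² < 1, i.e., p ∈ B_c^n. -/

import Mathlib

noncomputable section

/-- The conformal factor `λ_x^c = 2/(1 − c‖x‖²)` on the Poincaré ball. -/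
noncomputable def lam {n : ℕ} (c : ℝ) (x : EuclideanSpace ℝ (Fin n)) : ℝ :=
  2 / (1 - c * ‖x‖ ^ 2)

lemma ball_generic {n : ℕ} (c : ℝ) (hc : 0 < c) (w : EuclideanSpace ℝ (Fin n)) :
    c * ‖(1 + Real.sqrt (1 + c * ‖w‖ ^ 2))⁻¹ • w‖ ^ 2 < 1 := by
  set t := c * ‖w‖ ^ 2 with ht
  have ht0 : 0 ≤ t := by positivity
  have hs1 : 1 ≤ Real.sqrt (1 + t) := by
    have := Real.sqrt_le_sqrt (show (1:ℝ) ≤ 1 + t by linarith)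
    simpa using this
  set s := Real.sqrt (1 + t) with hsdef
  have hs2 : s ^ 2 = 1 + t := Real.sq_sqrt (by linarith)
  have hpos : (0:ℝ) < 1 + s := by linarith
  rw [norm_smul, mul_pow, norm_inv, Real.norm_eq_abs, abs_of_pos hpos]
  have hlt : t < (1 + s) ^ 2 := by nlinarith
  have : c * ((1 + s)⁻¹ ^ 2 * ‖w‖ ^ 2) = t / (1 + s) ^ 2 := by
    field_simp
    exact ht.symm
  rw [this, div_lt_one (by positivity)]
  exact hlt

/-- The weighted Möbius gyromidpoint is well defined and lies in the Poincaré
ball: the denominator `Σ_j α_j (λ_{v_j}^c − 1)` is at least `Σ_j α_j > 0`, and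
the point `p = w / (1 + √(1 + c‖w‖²))`, where
`w = (Σ_j α_j λ_{v_j}^c v_j) / (Σ_j α_j (λ_{v_j}^c − 1))`, lies in the ball. -/
theorem gyromidpoint_mem_ball {n : ℕ} (hn : 1 ≤ n) (c : ℝ) (hc : 0 < c)
    (T : ℕ) (v : Fin T → EuclideanSpace ℝ (Fin n)) (α : Fin T → ℝ)
    (hv : ∀ j, c * ‖v j‖ ^ 2 < 1) (hα : ∀ j, 0 ≤ α j)
    (hsum : 0 < ∑ j, α j) :
    (∑ j, α j) ≤ (∑ j, α j * (lam c (v j) - 1)) ∧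
    0 < (∑ j, α j * (lam c (v j) - 1)) ∧
    (let w : EuclideanSpace ℝ (Fin n) :=
        (∑ j, α j * (lam c (v j) - 1))⁻¹ • ∑ j, (α j * lam c (v j)) • v j;
      c * ‖(1 + Real.sqrt (1 + c * ‖w‖ ^ 2))⁻¹ • w‖ ^ 2 < 1) := by
  have h1 : (∑ j, α j) ≤ (∑ j, α j * (lam c (v j) - 1)) := by
    apply Finset.sum_le_sum
    intro j _
    have hvj := hv j
    have hnn : (0:ℝ) ≤ c * ‖v j‖ ^ 2 := by positivity
    have hlam : 1 ≤ lam c (v j) - 1 := by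
      have hpos : 0 < 1 - c * ‖v j‖ ^ 2 := by linarith
      have : 2 ≤ lam c (v j) := by
        rw [lam, le_div_iff₀ hpos]; linarith
      linarith
    nlinarith [hα j]
  exact ⟨h1, lt_of_lt_of_le hsum h1, ball_generic c hc _⟩
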